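/- Error equation for the interpolated dG(q) error (equation (4.4) of the paper). Let q ≥ 0, let (u₁,u₂) be the exact solution with u₁(t) ∈ Ḣ² for all t, let U ∈ 𝒱_q be the dG(q) approximation, and set θ := U − Π_k u and η := Π_k u − u (componentwise, u = (u₁,u₂)). Then for every V = (V₁,V₂) ∈ 𝒱_q, B(θ,V) = ∫₀^{t_N} ( a(η₂(t), V₁(t)) − (A η₁(t), V₂(t)) ) dt. -/

import Mathlib

/-!
By linearity of `B` in its first argument, `B(θ, V) = B(U, V) - B(Π_k u, V)`, and `B(U, V)` is the
right-hand side of the scheme. On each interval `I_n`, the time-derivative terms of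
`B(Π_k u, V)` are integrated by parts against the exact equations `u̇₁ = u₂`, `u̇₂ + A u₁ = f`:
the values at `t_n` vanish because `Π_k u` interpolates `u` there, the terms with `V̇` vanish
because `V̇` has degree `< q` and `η` is orthogonal to such polynomials, and the values at
`t_{n-1}⁺` cancel the jump terms of `B` (at `t_0` they combine with the initial terms of `B` into
the data `u₀, v₀`).
The energy form `a` is not continuous on `H`, so its integration by parts is done mode by mode in
the eigenbasis and summed by dominated convergence, the bound being the Cauchy–Schwarz estimate
`|a(v, w)| ≤ ‖v‖_β ‖w‖_γ` for `β + γ = 2`.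
-/

noncomputable section

open scoped RealInnerProductSpace BigOperators
open MeasureTheory

/-- Squared fractional-order norm `‖v‖_α² = Σ_k λ_k^α (v,φ_k)²`. -/
def hsNormSq {H : Type*} [NormedAddCommGroup H] [InnerProductSpace ℝ H]
    (φ : ℕ → H) (lam : ℕ → ℝ) (α : ℝ) (v : H) : ℝ :=
  ∑' k, lam k ^ α * ⟪v, φ k⟫ ^ 2

/-- Fractional-order norm `‖v‖_α`. -/
def hsNorm {H : Type*} [NormedAddCommGroup H] [InnerProductSpace ℝ H]
    (φ : ℕ → H) (lam : ℕ → ℝ) (α : ℝ) (v : H) : ℝ :=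
  Real.sqrt (hsNormSq φ lam α v)

/-- Membership in the fractional-order space `Ḣ^α`. -/
def MemHs {H : Type*} [NormedAddCommGroup H] [InnerProductSpace ℝ H]
    (φ : ℕ → H) (lam : ℕ → ℝ) (α : ℝ) (v : H) : Prop :=
  Summable (fun k => lam k ^ α * ⟪v, φ k⟫ ^ 2)

/-- Weighted spectral pairing `Σ_k λ_k^l (u,φ_k)(v,φ_k)`.
`aPow φ lam 1 u v = a(u,v)`, `aPow φ lam (l+1) u v = a(u, A^l v)` and
`aPow φ lam l u v = (u, A^l v)`. -/
def aPow {H : Type*} [NormedAddCommGroup H] [InnerProductSpace ℝ H]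
    (φ : ℕ → H) (lam : ℕ → ℝ) (l : ℝ) (u v : H) : ℝ :=
  ∑' k, lam k ^ l * ⟪u, φ k⟫ * ⟪v, φ k⟫

/-- The energy bilinear form `a(u,v) = Σ_k λ_k (u,φ_k)(v,φ_k)`. -/
def aForm {H : Type*} [NormedAddCommGroup H] [InnerProductSpace ℝ H]
    (φ : ℕ → H) (lam : ℕ → ℝ) (u v : H) : ℝ :=
  aPow φ lam 1 u v

/-- The operator `A`, determined by `A φ_k = λ_k φ_k`. -/
def Aop {H : Type*} [NormedAddCommGroup H] [InnerProductSpace ℝ H]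
    (φ : ℕ → H) (lam : ℕ → ℝ) (v : H) : H :=
  ∑' k, (lam k * ⟪v, φ k⟫) • φ k

/-- Value at time `s` of the polynomial of degree ≤ q (with coefficients `c n ·`)
attached to the `n`-th time subinterval. -/
def pval {H : Type*} [NormedAddCommGroup H] [InnerProductSpace ℝ H]
    (q : ℕ) (c : ℕ → ℕ → H) (n : ℕ) (s : ℝ) : H :=
  ∑ j ∈ Finset.range (q + 1), s ^ j • c n j

/-- Time derivative of `pval`. -/
def pderiv {H : Type*} [NormedAddCommGroup H] [InnerProductSpace ℝ H]
    (q : ℕ) (c : ℕ → ℕ → H) (n : ℕ) (s : ℝ) : H :=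
  ∑ j ∈ Finset.range (q + 1), ((j : ℝ) * s ^ (j - 1)) • c n j

/-- The dG bilinear form `B((u₁,u₂),(v₁,v₂))`, where the piecewise polynomials
`u₁, u₂, v₁, v₂` are described by their coefficient families `c1, c2, d1, d2`
(on the mesh `0 = tt 0 < tt 1 < ⋯ < tt N`). -/
def Bform {H : Type*} [NormedAddCommGroup H] [InnerProductSpace ℝ H]
    (φ : ℕ → H) (lam : ℕ → ℝ) (tt : ℕ → ℝ) (N q : ℕ)
    (c1 c2 d1 d2 : ℕ → ℕ → H) : ℝ :=
  (∑ n ∈ Finset.Icc 1 N, ∫ s in tt (n-1)..tt n,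
      (aForm φ lam (pderiv q c1 n s) (pval q d1 n s)
        - aForm φ lam (pval q c2 n s) (pval q d1 n s)
        + ⟪pderiv q c2 n s, pval q d2 n s⟫
        + aForm φ lam (pval q c1 n s) (pval q d2 n s)))
  + (∑ n ∈ Finset.Icc 1 (N-1),
      (aForm φ lam (pval q c1 (n+1) (tt n) - pval q c1 n (tt n)) (pval q d1 (n+1) (tt n))
        + ⟪pval q c2 (n+1) (tt n) - pval q c2 n (tt n), pval q d2 (n+1) (tt n)⟫))
  + aForm φ lam (pval q c1 1 (tt 0)) (pval q d1 1 (tt 0))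
  + ⟪pval q c2 1 (tt 0), pval q d2 1 (tt 0)⟫

/-- Supremum of `g` over the open interval `(a,b)`. -/
def supIoo (g : ℝ → ℝ) (a b : ℝ) : ℝ :=
  sSup (g '' Set.Ioo a b)

/-- Squared discrete fractional norm `‖v‖_{h,s}² = ‖A_h^{s/2} v‖²`, expressed through
an orthonormal eigenbasis `e` of `A_h` on `S_h` with eigenvalues `μ`. -/
def hNormSqh {H : Type*} [NormedAddCommGroup H] [InnerProductSpace ℝ H]
    {m : ℕ} (e : Fin m → H) (μ : Fin m → ℝ) (s : ℝ) (v : H) : ℝ :=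
  ∑ i, μ i ^ s * ⟪v, e i⟫ ^ 2

/-- Discrete fractional norm `‖v‖_{h,s}`. -/
def hNormh {H : Type*} [NormedAddCommGroup H] [InnerProductSpace ℝ H]
    {m : ℕ} (e : Fin m → H) (μ : Fin m → ℝ) (s : ℝ) (v : H) : ℝ :=
  Real.sqrt (hNormSqh e μ s v)

/-- Discrete weighted pairing: `aPowh e μ (l+1) u v = a(u, A_h^l v)` and
`aPowh e μ l u v = (u, A_h^l v)` for `u, v ∈ S_h`. -/
def aPowh {H : Type*} [NormedAddCommGroup H] [InnerProductSpace ℝ H]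
    {m : ℕ} (e : Fin m → H) (μ : Fin m → ℝ) (l : ℝ) (u v : H) : ℝ :=
  ∑ i, μ i ^ l * ⟪u, e i⟫ * ⟪v, e i⟫

lemma hasSum_intervalIntegral_of_tsum_abs_le {a b : ℝ} (hab : a ≤ b) {e : ℕ → ℝ → ℝ}
    {D : ℝ → ℝ} (he : ∀ k, ContinuousOn (e k) (Set.Icc a b))
    (hsum : ∀ s ∈ Set.Icc a b, Summable fun k => |e k s|)
    (hD : IntervalIntegrable D volume a b) (hle : ∀ s ∈ Set.Icc a b, ∑' k, |e k s| ≤ D s) :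
    IntervalIntegrable (fun s => ∑' k, e k s) volume a b ∧
      HasSum (fun k => ∫ s in a..b, e k s) (∫ s in a..b, ∑' k, e k s) := by
  have hsub : Set.uIoc a b ⊆ Set.Icc a b := by
    rw [Set.uIoc_of_le hab]; exact Set.Ioc_subset_Icc_self
  have hmeas : ∀ k, AEStronglyMeasurable (e k) (volume.restrict (Set.uIoc a b)) := fun k =>
    ((he k).mono hsub).aestronglyMeasurable measurableSet_uIoc
  have hae : ∀ᵐ s ∂(volume.restrict (Set.uIoc a b)), s ∈ Set.Icc a b :=
    (ae_restrict_mem measurableSet_uIoc).mono fun s hs => hsub hs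
  have hmeas_tsum : AEStronglyMeasurable (fun s => ∑' k, e k s)
      (volume.restrict (Set.uIoc a b)) :=
    aestronglyMeasurable_of_tendsto_ae Filter.atTop
      (fun m => Finset.aestronglyMeasurable_fun_sum (Finset.range m) fun k _ => hmeas k)
      (hae.mono fun s hs => (hsum s hs).of_abs.hasSum.tendsto_sum_nat)
  have hmeas_tsum_abs : AEStronglyMeasurable (fun s => ∑' k, |e k s|)
      (volume.restrict (Set.uIoc a b)) :=
    aestronglyMeasurable_of_tendsto_ae Filter.atTop
      (fun m => Finset.aestronglyMeasurable_fun_sum (Finset.range m) fun k _ => (hmeas k).norm)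
      (hae.mono fun s hs => (hsum s hs).hasSum.tendsto_sum_nat)
  have hint_abs : IntervalIntegrable (fun s => ∑' k, |e k s|) volume a b := by
    refine (intervalIntegrable_iff.mpr ((intervalIntegrable_iff.mp hD).mono' hmeas_tsum_abs ?_))
    filter_upwards [hae] with s hs
    rw [Real.norm_of_nonneg (tsum_nonneg fun k => abs_nonneg _)]
    exact hle s hs
  refine ⟨intervalIntegrable_iff.mpr
    ((intervalIntegrable_iff.mp hint_abs).mono' hmeas_tsum ?_), ?_⟩
  · filter_upwards [hae] with s hs
    exact norm_tsum_le_tsum_norm (hsum s hs)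
  · exact intervalIntegral.hasSum_integral_of_dominated_convergence (fun k s => |e k s|) hmeas
      (fun _ => ae_of_all _ fun _ _ => le_rfl)
      (ae_of_all _ fun s hs => hsum s (hsub hs)) hint_abs
      (ae_of_all _ fun s hs => (hsum s (hsub hs)).of_abs.hasSum)

lemma Finset.add_sum_Icc_succ {M : Type*} [AddCommMonoid M] (g : ℕ → M) (m : ℕ) :
    g 1 + ∑ n ∈ Finset.Icc 1 m, g (n + 1) = ∑ n ∈ Finset.Icc 1 (m + 1), g n := by
  induction m with
  | zero => simp
  | succ m ih =>
    rw [Finset.sum_Icc_succ_top (by omega), ← add_assoc, ih, ← Finset.sum_Icc_succ_top (by omega)]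

lemma le_of_forall_lt_succ {t : ℕ → ℝ} {N : ℕ} (ht : ∀ n < N, t n < t (n + 1)) {m n : ℕ}
    (hmn : m ≤ n) (hnN : n ≤ N) : t m ≤ t n := by
  induction n, hmn using Nat.le_induction with
  | base => exact le_rfl
  | succ k _ ih => exact (ih (by omega)).trans (ht k (by omega)).le

section WeightedSpaces

variable {H : Type*} [NormedAddCommGroup H] [InnerProductSpace ℝ H] {φ : ℕ → H} {lam : ℕ → ℝ}

def aPowTerm (φ : ℕ → H) (lam : ℕ → ℝ) (l : ℝ) (u v : H) (k : ℕ) : ℝ :=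
  lam k ^ l * ⟪u, φ k⟫ * ⟪v, φ k⟫

lemma aPow_eq_tsum (l : ℝ) (u v : H) : aPow φ lam l u v = ∑' k, aPowTerm φ lam l u v k := rfl

def hsCoeff (φ : ℕ → H) (lam : ℕ → ℝ) (α : ℝ) (u : H) (k : ℕ) : ℝ :=
  lam k ^ (α / 2) * ⟪u, φ k⟫

lemma hsCoeff_sq (hlam : ∀ k, 0 < lam k) (α : ℝ) (u : H) (k : ℕ) :
    hsCoeff φ lam α u k ^ 2 = lam k ^ α * ⟪u, φ k⟫ ^ 2 := by
  rw [hsCoeff, mul_pow, ← Real.rpow_natCast, ← Real.rpow_mul (hlam k).le]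
  norm_num

lemma aPowTerm_eq_hsCoeff_mul (hlam : ∀ k, 0 < lam k) {l β γ : ℝ} (hβγ : β + γ = 2 * l)
    (u v : H) (k : ℕ) :
    aPowTerm φ lam l u v k = hsCoeff φ lam β u k * hsCoeff φ lam γ v k := by
  have hl : lam k ^ l = lam k ^ (β / 2) * lam k ^ (γ / 2) := by
    rw [← Real.rpow_add (hlam k)]
    congr 1
    linarith
  rw [aPowTerm, hsCoeff, hsCoeff, hl]
  ring

lemma MemHs.summable_abs_hsCoeff_rpow_two (hlam : ∀ k, 0 < lam k) {α : ℝ} {u : H}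
    (hu : MemHs φ lam α u) : Summable fun k => |hsCoeff φ lam α u k| ^ (2 : ℝ) := by
  unfold MemHs at hu
  simpa only [Real.rpow_two, sq_abs, hsCoeff_sq hlam] using hu

lemma hsNorm_eq_tsum_rpow (hlam : ∀ k, 0 < lam k) (α : ℝ) (u : H) :
    hsNorm φ lam α u = (∑' k, |hsCoeff φ lam α u k| ^ (2 : ℝ)) ^ (1 / 2 : ℝ) := by
  simp only [hsNorm, hsNormSq, Real.sqrt_eq_rpow, Real.rpow_two, sq_abs, hsCoeff_sq hlam]

lemma summable_abs_aPowTerm (hlam : ∀ k, 0 < lam k) {l β γ : ℝ} (hβγ : β + γ = 2 * l)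
    {u v : H} (hu : MemHs φ lam β u) (hv : MemHs φ lam γ v) :
    Summable fun k => |aPowTerm φ lam l u v k| := by
  simp only [aPowTerm_eq_hsCoeff_mul hlam hβγ, abs_mul]
  exact Real.summable_mul_of_Lp_Lq_of_nonneg .two_two (fun _ => abs_nonneg _)
    (fun _ => abs_nonneg _) (hu.summable_abs_hsCoeff_rpow_two hlam)
    (hv.summable_abs_hsCoeff_rpow_two hlam)

lemma tsum_abs_aPowTerm_le (hlam : ∀ k, 0 < lam k) {l β γ : ℝ} (hβγ : β + γ = 2 * l)
    {u v : H} (hu : MemHs φ lam β u) (hv : MemHs φ lam γ v) :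
    ∑' k, |aPowTerm φ lam l u v k| ≤ hsNorm φ lam β u * hsNorm φ lam γ v := by
  simp only [aPowTerm_eq_hsCoeff_mul hlam hβγ, abs_mul, hsNorm_eq_tsum_rpow hlam]
  exact Real.inner_le_Lp_mul_Lq_tsum_of_nonneg .two_two (fun _ => abs_nonneg _)
    (fun _ => abs_nonneg _) (hu.summable_abs_hsCoeff_rpow_two hlam)
    (hv.summable_abs_hsCoeff_rpow_two hlam)

lemma summable_aPowTerm (hlam : ∀ k, 0 < lam k) {l β γ : ℝ} (hβγ : β + γ = 2 * l)
    {u v : H} (hu : MemHs φ lam β u) (hv : MemHs φ lam γ v) :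
    Summable (aPowTerm φ lam l u v) :=
  (summable_abs_aPowTerm hlam hβγ hu hv).of_abs

def hsSubmodule (φ : ℕ → H) (lam : ℕ → ℝ) (hlam : ∀ k, 0 < lam k) (α : ℝ) : Submodule ℝ H where
  carrier := {v | MemHs φ lam α v}
  zero_mem' := by simp [MemHs]
  add_mem' {x y} hx hy := by
    refine Summable.of_nonneg_of_le
      (fun k => mul_nonneg (Real.rpow_pos_of_pos (hlam k) α).le (sq_nonneg _))
      (fun k => ?_) ((hx.mul_left 2).add (hy.mul_left 2))
    have h : ⟪x + y, φ k⟫ ^ 2 ≤ 2 * ⟪x, φ k⟫ ^ 2 + 2 * ⟪y, φ k⟫ ^ 2 := by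
      rw [inner_add_left]; nlinarith [sq_nonneg (⟪x, φ k⟫ - ⟪y, φ k⟫)]
    exact (mul_le_mul_of_nonneg_left h (Real.rpow_pos_of_pos (hlam k) α).le).trans_eq
      (by ring)
  smul_mem' r x hx := by
    simpa only [Set.mem_ofPred_eq, MemHs, real_inner_smul_left, mul_pow, mul_left_comm _ (r ^ 2)]
      using hx.mul_left (r ^ 2)

lemma MemHs.sum_smul (hlam : ∀ k, 0 < lam k) {α : ℝ} {ι : Type*} (s : Finset ι) (f : ι → ℝ)
    {x : ι → H} (hx : ∀ i, MemHs φ lam α (x i)) : MemHs φ lam α (∑ i ∈ s, f i • x i) :=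
  (hsSubmodule φ lam hlam α).sum_mem fun i _ => (hsSubmodule φ lam hlam α).smul_mem _ (hx i)

lemma MemHs.sub (hlam : ∀ k, 0 < lam k) {α : ℝ} {x y : H}
    (hx : MemHs φ lam α x) (hy : MemHs φ lam α y) : MemHs φ lam α (x - y) :=
  (hsSubmodule φ lam hlam α).sub_mem hx hy

lemma Orthonormal.memHs_zero (hφ : Orthonormal ℝ φ) (lam : ℕ → ℝ) (v : H) :
    MemHs φ lam 0 v := by
  simpa [MemHs, real_inner_comm, sq_abs] using hφ.inner_products_summable v

lemma aPow_sub_left {l : ℝ} {u v w : H} (hu : Summable (aPowTerm φ lam l u w))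
    (hv : Summable (aPowTerm φ lam l v w)) :
    aPow φ lam l (u - v) w = aPow φ lam l u w - aPow φ lam l v w := by
  rw [aPow_eq_tsum, aPow_eq_tsum, aPow_eq_tsum, ← hu.tsum_sub hv]
  exact tsum_congr fun k => by simp only [aPowTerm, inner_sub_left]; ring

lemma aPow_sum_smul_sum_smul {l : ℝ} {ι κ : Type*} (s : Finset ι) (t : Finset κ)
    (f : ι → ℝ) (g : κ → ℝ) {x : ι → H} {y : κ → H}
    (hxy : ∀ i j, Summable (aPowTerm φ lam l (x i) (y j))) :
    aPow φ lam l (∑ i ∈ s, f i • x i) (∑ j ∈ t, g j • y j)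
      = ∑ i ∈ s, ∑ j ∈ t, f i * g j * aPow φ lam l (x i) (y j) := by
  have hterm : ∀ k, aPowTerm φ lam l (∑ i ∈ s, f i • x i) (∑ j ∈ t, g j • y j) k
      = ∑ i ∈ s, ∑ j ∈ t, f i * g j * aPowTerm φ lam l (x i) (y j) k := fun k => by
    simp only [aPowTerm, sum_inner, real_inner_smul_left, Finset.mul_sum, Finset.sum_mul]
    rw [Finset.sum_comm]
    exact Finset.sum_congr rfl fun i _ => Finset.sum_congr rfl fun j _ => by ring
  simp only [aPow_eq_tsum, hterm, ← tsum_mul_left]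
  rw [Summable.tsum_finsetSum fun i _ => summable_sum fun j _ => (hxy i j).mul_left _]
  exact Finset.sum_congr rfl fun i _ =>
    Summable.tsum_finsetSum fun j _ => (hxy i j).mul_left _

lemma continuous_aPow_sum_smul {l : ℝ} {ι κ : Type*} (s : Finset ι) (t : Finset κ)
    {f : ι → ℝ → ℝ} {g : κ → ℝ → ℝ} (hf : ∀ i, Continuous (f i)) (hg : ∀ j, Continuous (g j))
    {x : ι → H} {y : κ → H} (hxy : ∀ i j, Summable (aPowTerm φ lam l (x i) (y j))) :
    Continuous fun τ => aPow φ lam l (∑ i ∈ s, f i τ • x i) (∑ j ∈ t, g j τ • y j) := by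
  simp only [aPow_sum_smul_sum_smul s t _ _ hxy]
  fun_prop

lemma hsNormSq_eq_aPow (α : ℝ) (v : H) : hsNormSq φ lam α v = aPow φ lam α v v :=
  tsum_congr fun k => by ring

lemma continuous_hsNorm_sum_smul (hlam : ∀ k, 0 < lam k) {α : ℝ} {ι : Type*} (s : Finset ι)
    {f : ι → ℝ → ℝ} (hf : ∀ i, Continuous (f i)) {x : ι → H} (hx : ∀ i, MemHs φ lam α (x i)) :
    Continuous fun τ => hsNorm φ lam α (∑ i ∈ s, f i τ • x i) := by
  simp only [hsNorm, hsNormSq_eq_aPow]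
  exact (continuous_aPow_sum_smul s s hf hf fun i j =>
    summable_aPowTerm hlam (two_mul α).symm (hx i) (hx j)).sqrt

lemma aForm_sub_left (hlam : ∀ k, 0 < lam k) {β γ : ℝ} (hβγ : β + γ = 2) {u v w : H}
    (hu : MemHs φ lam β u) (hv : MemHs φ lam β v) (hw : MemHs φ lam γ w) :
    aForm φ lam (u - v) w = aForm φ lam u w - aForm φ lam v w :=
  aPow_sub_left (summable_aPowTerm hlam (by linarith) hu hw)
    (summable_aPowTerm hlam (by linarith) hv hw)

lemma hasSum_intervalIntegral_aPowTerm (hlam : ∀ k, 0 < lam k) {l β γ : ℝ}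
    (hβγ : β + γ = 2 * l) {a b : ℝ} (hab : a ≤ b) {g h : ℝ → H}
    (hg : ContinuousOn g (Set.Icc a b)) (hh : ContinuousOn h (Set.Icc a b))
    (hgβ : ∀ s, MemHs φ lam β (g s)) (hhγ : ∀ s, MemHs φ lam γ (h s))
    (hint : IntervalIntegrable (fun s => hsNorm φ lam β (g s) * hsNorm φ lam γ (h s)) volume a b) :
    IntervalIntegrable (fun s => aPow φ lam l (g s) (h s)) volume a b ∧
      HasSum (fun k => ∫ s in a..b, aPowTerm φ lam l (g s) (h s) k)
        (∫ s in a..b, aPow φ lam l (g s) (h s)) :=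
  hasSum_intervalIntegral_of_tsum_abs_le hab
    (fun _ => (continuousOn_const.mul (hg.inner continuousOn_const)).mul
      (hh.inner continuousOn_const))
    (fun s _ => summable_abs_aPowTerm hlam hβγ (hgβ s) (hhγ s)) hint
    (fun s _ => tsum_abs_aPowTerm_le hlam hβγ (hgβ s) (hhγ s))

lemma inner_Aop_eq_aForm [CompleteSpace H] (hφ : Orthonormal ℝ φ) {v : H}
    (hv : MemHs φ lam 2 v) (w : H) : ⟪Aop φ lam v, w⟫ = aForm φ lam v w := by
  have hsq : Summable fun k => ‖lam k * ⟪v, φ k⟫‖ ^ 2 := by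
    refine hv.congr fun k => ?_
    rw [Real.norm_eq_abs, sq_abs, mul_pow, Real.rpow_two]
  have hsum : HasSum (fun k => (lam k * ⟪v, φ k⟫) • φ k) (Aop φ lam v) :=
    ((hφ.orthogonalFamily.summable_iff_norm_sq_summable _).mpr hsq).hasSum
  have hpair := (hsum.mapL (innerSL ℝ w)).tsum_eq
  simp only [innerSL_apply_apply, real_inner_smul_right] at hpair
  rw [real_inner_comm, ← hpair]
  exact tsum_congr fun k => by rw [Real.rpow_one]

section TimePolynomials

variable {q n : ℕ}

lemma hasDerivAt_pval (c : ℕ → ℕ → H) (s : ℝ) :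
    HasDerivAt (pval q c n) (pderiv q c n s) s := by
  unfold pval pderiv
  exact HasDerivAt.fun_sum fun j _ => (hasDerivAt_pow j s).smul_const (c n j)

lemma continuous_pval (c : ℕ → ℕ → H) : Continuous (pval q c n) := by
  unfold pval; fun_prop

lemma continuous_pderiv (c : ℕ → ℕ → H) : Continuous (pderiv q c n) := by
  unfold pderiv; fun_prop

lemma pval_sub (c c' : ℕ → ℕ → H) (s : ℝ) :
    pval q (fun m j => c m j - c' m j) n s = pval q c n s - pval q c' n s := by
  simp only [pval, smul_sub, Finset.sum_sub_distrib]

lemma pderiv_sub (c c' : ℕ → ℕ → H) (s : ℝ) :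
    pderiv q (fun m j => c m j - c' m j) n s = pderiv q c n s - pderiv q c' n s := by
  simp only [pderiv, smul_sub, Finset.sum_sub_distrib]

lemma pval_inner_smul (d : ℕ → ℕ → H) (w : H) (s : ℝ) :
    pval q (fun m j => ⟪d m j, w⟫ • w) n s = ⟪pval q d n s, w⟫ • w := by
  simp only [pval, sum_inner, real_inner_smul_left, Finset.sum_smul, smul_smul]

lemma IntervalIntegrable.inner_pval {a b : ℝ} {f : ℝ → H} (hf : IntervalIntegrable f volume a b)
    (d : ℕ → ℕ → H) : IntervalIntegrable (fun s => ⟪f s, pval q d n s⟫) volume a b := by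
  have hsum := IntervalIntegrable.sum (Finset.range (q + 1)) fun j _ =>
    (show IntervalIntegrable (fun s => ⟪f s, d n j⟫) volume a b from
      ⟨hf.1.inner_const _, hf.2.inner_const _⟩).continuousOn_mul (continuous_pow j).continuousOn
  simpa only [pval, inner_sum, real_inner_smul_right, Finset.sum_fn] using hsum

lemma MemHs.pval (hlam : ∀ k, 0 < lam k) {α : ℝ} {d : ℕ → ℕ → H} (hd : ∀ j, MemHs φ lam α (d n j))
    (s : ℝ) : MemHs φ lam α (pval q d n s) :=
  MemHs.sum_smul hlam _ _ hd

lemma MemHs.pderiv (hlam : ∀ k, 0 < lam k) {α : ℝ} {d : ℕ → ℕ → H}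
    (hd : ∀ j, MemHs φ lam α (d n j)) (s : ℝ) : MemHs φ lam α (pderiv q d n s) :=
  MemHs.sum_smul hlam _ _ hd

lemma continuous_hsNorm_pval (hlam : ∀ k, 0 < lam k) {α : ℝ} {d : ℕ → ℕ → H}
    (hd : ∀ j, MemHs φ lam α (d n j)) : Continuous fun s => hsNorm φ lam α (pval q d n s) :=
  continuous_hsNorm_sum_smul hlam _ (fun j => continuous_pow j) hd

lemma continuous_hsNorm_pderiv (hlam : ∀ k, 0 < lam k) {α : ℝ} {d : ℕ → ℕ → H}
    (hd : ∀ j, MemHs φ lam α (d n j)) : Continuous fun s => hsNorm φ lam α (pderiv q d n s) :=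
  continuous_hsNorm_sum_smul hlam _ (fun j => continuous_const.mul (continuous_pow (j - 1))) hd

lemma continuous_aForm_pval_pval (hlam : ∀ k, 0 < lam k) {c d : ℕ → ℕ → H}
    (hc : ∀ j, MemHs φ lam 1 (c n j)) (hd : ∀ j, MemHs φ lam 1 (d n j)) :
    Continuous fun s => aForm φ lam (pval q c n s) (pval q d n s) :=
  continuous_aPow_sum_smul _ _ (fun j => continuous_pow j) (fun j => continuous_pow j)
    fun i j => summable_aPowTerm hlam (by norm_num) (hc i) (hd j)

lemma continuous_aForm_pderiv_pval (hlam : ∀ k, 0 < lam k) {c d : ℕ → ℕ → H}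
    (hc : ∀ j, MemHs φ lam 1 (c n j)) (hd : ∀ j, MemHs φ lam 1 (d n j)) :
    Continuous fun s => aForm φ lam (pderiv q c n s) (pval q d n s) :=
  continuous_aPow_sum_smul _ _ (fun j => continuous_const.mul (continuous_pow (j - 1)))
    (fun j => continuous_pow j) fun i j => summable_aPowTerm hlam (by norm_num) (hc i) (hd j)

lemma hasSum_intervalIntegral_aPowTerm_pval (hlam : ∀ k, 0 < lam k) {l β γ : ℝ}
    (hβγ : β + γ = 2 * l) {a b : ℝ} (hab : a ≤ b) {g : ℝ → H} {d : ℕ → ℕ → H}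
    (hg : ContinuousOn g (Set.Icc a b)) (hgβ : ∀ s, MemHs φ lam β (g s))
    (hgi : IntervalIntegrable (fun s => hsNorm φ lam β (g s)) volume a b)
    (hd : ∀ j, MemHs φ lam γ (d n j)) :
    IntervalIntegrable (fun s => aPow φ lam l (g s) (pval q d n s)) volume a b ∧
      HasSum (fun k => ∫ s in a..b, aPowTerm φ lam l (g s) (pval q d n s) k)
        (∫ s in a..b, aPow φ lam l (g s) (pval q d n s)) :=
  hasSum_intervalIntegral_aPowTerm hlam hβγ hab hg (continuous_pval d).continuousOn hgβ
    (MemHs.pval hlam hd) (hgi.mul_continuousOn (continuous_hsNorm_pval hlam hd).continuousOn)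

lemma aPowTerm_eq_inner_pval_inner_smul (l : ℝ) (w : H) (d : ℕ → ℕ → H) (s : ℝ) (k : ℕ) :
    aPowTerm φ lam l w (pval q d n s) k
      = lam k ^ l * ⟪w, pval q (fun m j => ⟪d m j, φ k⟫ • φ k) n s⟫ := by
  rw [pval_inner_smul, real_inner_smul_right, aPowTerm]
  ring

end TimePolynomials

section DGForm

variable {q : ℕ}

def dGIntegrand (φ : ℕ → H) (lam : ℕ → ℝ) (q : ℕ) (c1 c2 d1 d2 : ℕ → ℕ → H) (n : ℕ)
    (s : ℝ) : ℝ :=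
  aForm φ lam (pderiv q c1 n s) (pval q d1 n s) - aForm φ lam (pval q c2 n s) (pval q d1 n s)
    + ⟪pderiv q c2 n s, pval q d2 n s⟫ + aForm φ lam (pval q c1 n s) (pval q d2 n s)

def dGJump (φ : ℕ → H) (lam : ℕ → ℝ) (tt : ℕ → ℝ) (q : ℕ) (c1 c2 d1 d2 : ℕ → ℕ → H)
    (n : ℕ) : ℝ :=
  aForm φ lam (pval q c1 (n + 1) (tt n) - pval q c1 n (tt n)) (pval q d1 (n + 1) (tt n))
    + ⟪pval q c2 (n + 1) (tt n) - pval q c2 n (tt n), pval q d2 (n + 1) (tt n)⟫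

lemma Bform_eq (φ : ℕ → H) (lam : ℕ → ℝ) (tt : ℕ → ℝ) (N q : ℕ) (c1 c2 d1 d2 : ℕ → ℕ → H) :
    Bform φ lam tt N q c1 c2 d1 d2
      = (∑ n ∈ Finset.Icc 1 N, ∫ s in tt (n - 1)..tt n, dGIntegrand φ lam q c1 c2 d1 d2 n s)
        + (∑ n ∈ Finset.Icc 1 (N - 1), dGJump φ lam tt q c1 c2 d1 d2 n)
        + aForm φ lam (pval q c1 1 (tt 0)) (pval q d1 1 (tt 0))
        + ⟪pval q c2 1 (tt 0), pval q d2 1 (tt 0)⟫ :=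
  rfl

lemma continuous_dGIntegrand (hlam : ∀ k, 0 < lam k) {c1 c2 d1 d2 : ℕ → ℕ → H} {n : ℕ}
    (hc1 : ∀ j, MemHs φ lam 1 (c1 n j)) (hc2 : ∀ j, MemHs φ lam 1 (c2 n j))
    (hd1 : ∀ j, MemHs φ lam 1 (d1 n j)) (hd2 : ∀ j, MemHs φ lam 1 (d2 n j)) :
    Continuous (dGIntegrand φ lam q c1 c2 d1 d2 n) :=
  (((continuous_aForm_pderiv_pval hlam hc1 hd1).sub (continuous_aForm_pval_pval hlam hc2 hd1)).add
    ((continuous_pderiv c2).inner (continuous_pval d2))).add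
    (continuous_aForm_pval_pval hlam hc1 hd2)

lemma Bform_sub (hlam : ∀ k, 0 < lam k) (tt : ℕ → ℝ) (N : ℕ) {c1 c2 P1 P2 d1 d2 : ℕ → ℕ → H}
    (hc1 : ∀ n j, MemHs φ lam 1 (c1 n j)) (hc2 : ∀ n j, MemHs φ lam 1 (c2 n j))
    (hP1 : ∀ n j, MemHs φ lam 1 (P1 n j)) (hP2 : ∀ n j, MemHs φ lam 1 (P2 n j))
    (hd1 : ∀ n j, MemHs φ lam 1 (d1 n j)) (hd2 : ∀ n j, MemHs φ lam 1 (d2 n j)) :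
    Bform φ lam tt N q (fun n j => c1 n j - P1 n j) (fun n j => c2 n j - P2 n j) d1 d2
      = Bform φ lam tt N q c1 c2 d1 d2 - Bform φ lam tt N q P1 P2 d1 d2 := by
  have hsubL : ∀ {x y w : H}, MemHs φ lam 1 x → MemHs φ lam 1 y → MemHs φ lam 1 w →
      aForm φ lam (x - y) w = aForm φ lam x w - aForm φ lam y w :=
    aForm_sub_left hlam (by norm_num)
  have hvol : ∀ n, ∫ s in tt (n - 1)..tt n,
      dGIntegrand φ lam q (fun n j => c1 n j - P1 n j) (fun n j => c2 n j - P2 n j) d1 d2 n s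
      = (∫ s in tt (n - 1)..tt n, dGIntegrand φ lam q c1 c2 d1 d2 n s)
        - ∫ s in tt (n - 1)..tt n, dGIntegrand φ lam q P1 P2 d1 d2 n s := fun n => by
    rw [← intervalIntegral.integral_sub
      ((continuous_dGIntegrand hlam (hc1 n) (hc2 n) (hd1 n) (hd2 n)).intervalIntegrable _ _)
      ((continuous_dGIntegrand hlam (hP1 n) (hP2 n) (hd1 n) (hd2 n)).intervalIntegrable _ _)]
    refine intervalIntegral.integral_congr fun s _ => ?_
    have hV1 := MemHs.pval hlam (hd1 n) (q := q) s
    simp only [dGIntegrand, pval_sub, pderiv_sub, inner_sub_left,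
      hsubL (MemHs.pderiv hlam (hc1 n) s) (MemHs.pderiv hlam (hP1 n) s) hV1,
      hsubL (MemHs.pval hlam (hc2 n) s) (MemHs.pval hlam (hP2 n) s) hV1,
      hsubL (MemHs.pval hlam (hc1 n) s) (MemHs.pval hlam (hP1 n) s) (MemHs.pval hlam (hd2 n) s)]
    ring
  have hjump : ∀ n, dGJump φ lam tt q (fun n j => c1 n j - P1 n j) (fun n j => c2 n j - P2 n j)
      d1 d2 n = dGJump φ lam tt q c1 c2 d1 d2 n - dGJump φ lam tt q P1 P2 d1 d2 n := fun n => by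
    simp only [dGJump, pval_sub, sub_sub_sub_comm _ (pval q P1 _ _), inner_sub_left]
    rw [hsubL ((MemHs.pval hlam (hc1 (n + 1)) _).sub hlam (MemHs.pval hlam (hc1 n) _))
      ((MemHs.pval hlam (hP1 (n + 1)) _).sub hlam (MemHs.pval hlam (hP1 n) _))
      (MemHs.pval hlam (hd1 (n + 1)) _)]
    ring
  simp only [Bform_eq, hvol, hjump, Finset.sum_sub_distrib, pval_sub, inner_sub_left,
    hsubL (MemHs.pval hlam (hc1 1) (tt 0)) (MemHs.pval hlam (hP1 1) (tt 0))
      (MemHs.pval hlam (hd1 1) (tt 0))]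
  ring

end DGForm

section IntegrationByParts

variable [CompleteSpace H] {q n : ℕ} {a b : ℝ}

/-- The time derivative of a degree-`q` polynomial has degree `< q`. -/
lemma integral_inner_pderiv_eq_zero {η : ℝ → H} (hη : ContinuousOn η (Set.uIcc a b))
    (horth : ∀ j ∈ Finset.range q, ∫ s in a..b, s ^ j • η s = 0) (d : ℕ → ℕ → H) :
    ∫ s in a..b, ⟪η s, pderiv q d n s⟫ = 0 := by
  have hint : ∀ j, IntervalIntegrable (fun s => s ^ j • η s) volume a b := fun j =>
    ((continuous_pow j).continuousOn.smul hη).intervalIntegrable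
  have hterm : ∀ j ∈ Finset.range (q + 1),
      ∫ s in a..b, ⟪η s, ((j : ℝ) * s ^ (j - 1)) • d n j⟫ = 0 := by
    intro j hj
    rcases Nat.eq_zero_or_pos j with rfl | hj0
    · simp
    have hj' : j - 1 ∈ Finset.range q := by
      rw [Finset.mem_range] at hj ⊢; omega
    calc ∫ s in a..b, ⟪η s, ((j : ℝ) * s ^ (j - 1)) • d n j⟫
        = (j : ℝ) * ∫ s in a..b, innerSL ℝ (d n j) (s ^ (j - 1) • η s) := by
          rw [← intervalIntegral.integral_const_mul]
          refine intervalIntegral.integral_congr fun s _ => ?_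
          simp only [innerSL_apply_apply, real_inner_smul_right, real_inner_comm (η s)]
          ring
      _ = 0 := by
          rw [(innerSL ℝ (d n j)).intervalIntegral_comp_comm (hint _), horth _ hj',
            map_zero, mul_zero]
  simp only [pderiv, inner_sum]
  rw [intervalIntegral.integral_finsetSum fun j _ =>
    (hη.inner (by fun_prop)).intervalIntegrable]
  exact Finset.sum_eq_zero hterm

lemma integral_inner_deriv_pval_eq_neg (hab : a ≤ b) {η η' : ℝ → H} {d : ℕ → ℕ → H}
    (hη : ContinuousOn η (Set.Icc a b)) (hη' : ∀ s ∈ Set.Ioo a b, HasDerivAt η (η' s) s)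
    (hint : IntervalIntegrable (fun s => ⟪η' s, pval q d n s⟫) volume a b) (hb : η b = 0)
    (horth : ∀ j ∈ Finset.range q, ∫ s in a..b, s ^ j • η s = 0) :
    ∫ s in a..b, ⟪η' s, pval q d n s⟫ = -⟪η a, pval q d n a⟫ := by
  have hη_uIcc : ContinuousOn η (Set.uIcc a b) := by rwa [Set.uIcc_of_le hab]
  have hint' : IntervalIntegrable (fun s => ⟪η s, pderiv q d n s⟫) volume a b :=
    (hη_uIcc.inner (continuous_pderiv d).continuousOn).intervalIntegrable
  have hftc := intervalIntegral.integral_eq_sub_of_hasDeriv_right_of_le hab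
    (hη.inner (continuous_pval d).continuousOn)
    (fun s hs => (((hη' s hs).inner ℝ (hasDerivAt_pval d s)).hasDerivWithinAt).congr_deriv
      (add_comm _ _)) (hint.add hint')
  rw [intervalIntegral.integral_add hint hint', integral_inner_pderiv_eq_zero hη_uIcc horth,
    hb, inner_zero_left] at hftc
  linarith

lemma integral_aForm_interpolant_deriv (hlam : ∀ k, 0 < lam k) (hab : a ≤ b) {u1 u2 : ℝ → H}
    (hu1c : ContinuousOn u1 (Set.Icc a b)) (hu2c : ContinuousOn u2 (Set.Icc a b))
    (hu2V : ∀ t, MemHs φ lam 1 (u2 t))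
    (hu2Vi : IntervalIntegrable (fun t => hsNorm φ lam 1 (u2 t)) volume a b)
    (hode1 : ∀ t ∈ Set.Ioo a b, HasDerivAt u1 (u2 t) t)
    {P d : ℕ → ℕ → H} (hP : ∀ j, MemHs φ lam 1 (P n j)) (hd : ∀ j, MemHs φ lam 1 (d n j))
    (hnode : pval q P n b = u1 b)
    (horth : ∀ j ∈ Finset.range q, ∫ s in a..b, s ^ j • (pval q P n s - u1 s) = 0) :
    IntervalIntegrable (fun s => aForm φ lam (pderiv q P n s) (pval q d n s)
        - aForm φ lam (u2 s) (pval q d n s)) volume a b ∧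
      ∫ s in a..b, (aForm φ lam (pderiv q P n s) (pval q d n s)
        - aForm φ lam (u2 s) (pval q d n s))
        = -aForm φ lam (pval q P n a - u1 a) (pval q d n a) := by
  obtain ⟨hPi, hPsum⟩ := hasSum_intervalIntegral_aPowTerm_pval (l := 1) hlam (by norm_num) hab
    (continuous_pderiv P).continuousOn (MemHs.pderiv hlam hP)
    ((continuous_hsNorm_pderiv hlam hP).intervalIntegrable a b) hd
  obtain ⟨hu2i, hu2sum⟩ := hasSum_intervalIntegral_aPowTerm_pval (l := 1) hlam (by norm_num) hab
    hu2c hu2V hu2Vi hd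
  have hmode : ∀ k, (∫ s in a..b, aPowTerm φ lam 1 (pderiv q P n s) (pval q d n s) k)
      - ∫ s in a..b, aPowTerm φ lam 1 (u2 s) (pval q d n s) k
      = -aPowTerm φ lam 1 (pval q P n a - u1 a) (pval q d n a) k := by
    intro k
    have hcont : ∀ w : ℝ → H, ContinuousOn w (Set.Icc a b) → IntervalIntegrable
        (fun s => aPowTerm φ lam 1 (w s) (pval q d n s) k) volume a b := fun w hw =>
      ((continuousOn_const.mul (hw.inner continuousOn_const)).mul
        ((continuous_pval d).continuousOn.inner continuousOn_const)).intervalIntegrable_of_Icc hab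
    have hη' : ContinuousOn (fun s => pderiv q P n s - u2 s) (Set.Icc a b) :=
      (continuous_pderiv P).continuousOn.sub hu2c
    rw [← intervalIntegral.integral_sub (hcont _ (continuous_pderiv P).continuousOn)
      (hcont _ hu2c)]
    simp only [aPowTerm_eq_inner_pval_inner_smul, ← mul_sub, ← inner_sub_left,
      intervalIntegral.integral_const_mul]
    rw [integral_inner_deriv_pval_eq_neg hab ((continuous_pval P).continuousOn.sub hu1c)
      (fun s hs => (hasDerivAt_pval P s).sub (hode1 s hs))
      ((hη'.inner (continuous_pval _).continuousOn).intervalIntegrable_of_Icc hab)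
      (sub_eq_zero.mpr hnode) horth]
    exact mul_neg _ _
  unfold aForm
  refine ⟨hPi.sub hu2i, ?_⟩
  rw [intervalIntegral.integral_sub hPi hu2i, ← (hPsum.sub hu2sum).tsum_eq, aPow_eq_tsum,
    ← tsum_neg]
  exact tsum_congr hmode

lemma integral_inner_interpolant_deriv (hφ : Orthonormal ℝ φ) (hlam : ∀ k, 0 < lam k)
    (hab : a ≤ b) {f u1 u2 : ℝ → H}
    (hu1c : ContinuousOn u1 (Set.Icc a b)) (hu2c : ContinuousOn u2 (Set.Icc a b))
    (hu1H2 : ∀ t, MemHs φ lam 2 (u1 t))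
    (hu1H2i : IntervalIntegrable (fun t => hsNorm φ lam 2 (u1 t)) volume a b)
    (hf : IntervalIntegrable f volume a b)
    (hode2 : ∀ t ∈ Set.Ioo a b, HasDerivAt u2 (f t - Aop φ lam (u1 t)) t)
    {P d : ℕ → ℕ → H} (hnode : pval q P n b = u2 b)
    (horth : ∀ j ∈ Finset.range q, ∫ s in a..b, s ^ j • (pval q P n s - u2 s) = 0) :
    IntervalIntegrable (fun s => ⟪pderiv q P n s, pval q d n s⟫
        + aForm φ lam (u1 s) (pval q d n s) - ⟪f s, pval q d n s⟫) volume a b ∧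
      ∫ s in a..b, (⟪pderiv q P n s, pval q d n s⟫
        + aForm φ lam (u1 s) (pval q d n s) - ⟪f s, pval q d n s⟫)
        = -⟪pval q P n a - u2 a, pval q d n a⟫ := by
  have hint : IntervalIntegrable (fun s => ⟪pderiv q P n s, pval q d n s⟫
      + aForm φ lam (u1 s) (pval q d n s) - ⟪f s, pval q d n s⟫) volume a b :=
    ((((continuous_pderiv P).inner (continuous_pval d)).intervalIntegrable a b).add
      (hasSum_intervalIntegral_aPowTerm_pval (l := 1) hlam (by norm_num) hab hu1c hu1H2 hu1H2i
        fun j => hφ.memHs_zero lam (d n j)).1).sub (hf.inner_pval d)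
  have hpoint : ∀ s, ⟪pderiv q P n s, pval q d n s⟫ + aForm φ lam (u1 s) (pval q d n s)
      - ⟪f s, pval q d n s⟫ = ⟪pderiv q P n s - (f s - Aop φ lam (u1 s)), pval q d n s⟫ :=
    fun s => by rw [inner_sub_left, inner_sub_left, inner_Aop_eq_aForm hφ (hu1H2 s)]; ring
  simp only [hpoint] at hint ⊢
  exact ⟨hint, integral_inner_deriv_pval_eq_neg hab ((continuous_pval P).continuousOn.sub hu2c)
    (fun s hs => (hasDerivAt_pval P s).sub (hode2 s hs)) hint (sub_eq_zero.mpr hnode) horth⟩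

lemma integral_dGIntegrand_interpolant (hφ : Orthonormal ℝ φ) (hlam : ∀ k, 0 < lam k)
    (hab : a ≤ b) {f u1 u2 : ℝ → H}
    (hu1c : ContinuousOn u1 (Set.Icc a b)) (hu2c : ContinuousOn u2 (Set.Icc a b))
    (hu1H2 : ∀ t, MemHs φ lam 2 (u1 t)) (hu2V : ∀ t, MemHs φ lam 1 (u2 t))
    (hu1H2i : IntervalIntegrable (fun t => hsNorm φ lam 2 (u1 t)) volume a b)
    (hu2Vi : IntervalIntegrable (fun t => hsNorm φ lam 1 (u2 t)) volume a b)
    (hf : IntervalIntegrable f volume a b)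
    (hode1 : ∀ t ∈ Set.Ioo a b, HasDerivAt u1 (u2 t) t)
    (hode2 : ∀ t ∈ Set.Ioo a b, HasDerivAt u2 (f t - Aop φ lam (u1 t)) t)
    {P1 P2 d1 d2 : ℕ → ℕ → H}
    (hP1V : ∀ j, MemHs φ lam 1 (P1 n j)) (hP1H2 : ∀ j, MemHs φ lam 2 (P1 n j))
    (hP2V : ∀ j, MemHs φ lam 1 (P2 n j))
    (hd1 : ∀ j, MemHs φ lam 1 (d1 n j)) (hd2 : ∀ j, MemHs φ lam 1 (d2 n j))
    (hnode1 : pval q P1 n b = u1 b) (hnode2 : pval q P2 n b = u2 b)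
    (horth1 : ∀ j ∈ Finset.range q, ∫ s in a..b, s ^ j • (pval q P1 n s - u1 s) = 0)
    (horth2 : ∀ j ∈ Finset.range q, ∫ s in a..b, s ^ j • (pval q P2 n s - u2 s) = 0) :
    ∫ s in a..b, dGIntegrand φ lam q P1 P2 d1 d2 n s
      = (∫ s in a..b, ⟪f s, pval q d2 n s⟫)
        - aForm φ lam (pval q P1 n a - u1 a) (pval q d1 n a)
        - ⟪pval q P2 n a - u2 a, pval q d2 n a⟫
        - ∫ s in a..b, (aForm φ lam (pval q P2 n s - u2 s) (pval q d1 n s)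
            - ⟪Aop φ lam (pval q P1 n s - u1 s), pval q d2 n s⟫) := by
  obtain ⟨hK1i, hK1⟩ := integral_aForm_interpolant_deriv hlam hab hu1c hu2c hu2V hu2Vi hode1
    hP1V hd1 hnode1 horth1
  obtain ⟨hK2i, hK2⟩ := integral_inner_interpolant_deriv (d := d2) hφ hlam hab hu1c hu2c hu1H2
    hu1H2i hf hode2 hnode2 horth2
  have hdGi : IntervalIntegrable (dGIntegrand φ lam q P1 P2 d1 d2 n) volume a b :=
    (continuous_dGIntegrand hlam hP1V hP2V hd1 hd2).intervalIntegrable a b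
  have hpoint : ∀ s, aForm φ lam (pval q P2 n s - u2 s) (pval q d1 n s)
      - ⟪Aop φ lam (pval q P1 n s - u1 s), pval q d2 n s⟫
      = (aForm φ lam (pderiv q P1 n s) (pval q d1 n s) - aForm φ lam (u2 s) (pval q d1 n s))
        + (⟪pderiv q P2 n s, pval q d2 n s⟫ + aForm φ lam (u1 s) (pval q d2 n s)
          - ⟪f s, pval q d2 n s⟫)
        + ⟪f s, pval q d2 n s⟫ - dGIntegrand φ lam q P1 P2 d1 d2 n s := fun s => by
    rw [inner_Aop_eq_aForm hφ ((MemHs.pval hlam hP1H2 s).sub hlam (hu1H2 s)),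
      aForm_sub_left hlam (by norm_num) (MemHs.pval hlam hP2V s) (hu2V s)
        (MemHs.pval hlam hd1 s),
      aForm_sub_left hlam (by norm_num) (MemHs.pval hlam hP1H2 s) (hu1H2 s)
        (hφ.memHs_zero lam _), dGIntegrand]
    ring
  rw [intervalIntegral.integral_congr fun s _ => hpoint s,
    intervalIntegral.integral_sub ((hK1i.add hK2i).add (hf.inner_pval d2)) hdGi,
    intervalIntegral.integral_add (hK1i.add hK2i) (hf.inner_pval d2),
    intervalIntegral.integral_add hK1i hK2i, hK1, hK2]
  ring

lemma Bform_interpolant (hφ : Orthonormal ℝ φ) (hlam : ∀ k, 0 < lam k) {T : ℝ} {N : ℕ}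
    (hN : 1 ≤ N) {tt : ℕ → ℝ} (ht0 : tt 0 = 0) (htN : tt N = T)
    (htmono : ∀ n < N, tt n < tt (n + 1)) {f u1 u2 : ℝ → H} (hf : IntervalIntegrable f volume 0 T)
    (hu1c : ContinuousOn u1 (Set.Icc 0 T)) (hu2c : ContinuousOn u2 (Set.Icc 0 T))
    (hu1H2 : ∀ t, MemHs φ lam 2 (u1 t)) (hu2V : ∀ t, MemHs φ lam 1 (u2 t))
    (hu1H2i : IntervalIntegrable (fun t => hsNorm φ lam 2 (u1 t)) volume 0 T)
    (hu2Vi : IntervalIntegrable (fun t => hsNorm φ lam 1 (u2 t)) volume 0 T)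
    (hode1 : ∀ t ∈ Set.Ioo 0 T, HasDerivAt u1 (u2 t) t)
    (hode2 : ∀ t ∈ Set.Ioo 0 T, HasDerivAt u2 (f t - Aop φ lam (u1 t)) t)
    {P1 P2 d1 d2 : ℕ → ℕ → H}
    (hP1V : ∀ n j, MemHs φ lam 1 (P1 n j)) (hP1H2 : ∀ n j, MemHs φ lam 2 (P1 n j))
    (hP2V : ∀ n j, MemHs φ lam 1 (P2 n j))
    (hd1 : ∀ n j, MemHs φ lam 1 (d1 n j)) (hd2 : ∀ n j, MemHs φ lam 1 (d2 n j))
    (hP1node : ∀ n ∈ Finset.Icc 1 N, pval q P1 n (tt n) = u1 (tt n))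
    (hP2node : ∀ n ∈ Finset.Icc 1 N, pval q P2 n (tt n) = u2 (tt n))
    (hP1orth : ∀ n ∈ Finset.Icc 1 N, ∀ j ∈ Finset.range q,
      (∫ s in tt (n-1)..tt n, (s ^ j) • (pval q P1 n s - u1 s)) = 0)
    (hP2orth : ∀ n ∈ Finset.Icc 1 N, ∀ j ∈ Finset.range q,
      (∫ s in tt (n-1)..tt n, (s ^ j) • (pval q P2 n s - u2 s)) = 0) :
    Bform φ lam tt N q P1 P2 d1 d2
      = (∑ n ∈ Finset.Icc 1 N, ∫ s in tt (n - 1)..tt n, ⟪f s, pval q d2 n s⟫)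
        + aForm φ lam (u1 0) (pval q d1 1 (tt 0)) + ⟪u2 0, pval q d2 1 (tt 0)⟫
        - ∑ n ∈ Finset.Icc 1 N, ∫ s in tt (n - 1)..tt n,
            (aForm φ lam (pval q P2 n s - u2 s) (pval q d1 n s)
              - ⟪Aop φ lam (pval q P1 n s - u1 s), pval q d2 n s⟫) := by
  set A : ℕ → ℝ := fun m =>
    aForm φ lam (pval q P1 m (tt (m - 1)) - u1 (tt (m - 1))) (pval q d1 m (tt (m - 1)))
  set B : ℕ → ℝ := fun m => ⟪pval q P2 m (tt (m - 1)) - u2 (tt (m - 1)), pval q d2 m (tt (m - 1))⟫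
  have hinterval : ∀ n ∈ Finset.Icc 1 N,
      ∫ s in tt (n - 1)..tt n, dGIntegrand φ lam q P1 P2 d1 d2 n s
      = (∫ s in tt (n - 1)..tt n, ⟪f s, pval q d2 n s⟫) - A n - B n
        - ∫ s in tt (n - 1)..tt n, (aForm φ lam (pval q P2 n s - u2 s) (pval q d1 n s)
            - ⟪Aop φ lam (pval q P1 n s - u1 s), pval q d2 n s⟫) := by
    intro n hn
    obtain ⟨hn1, hnN⟩ := Finset.mem_Icc.mp hn
    have h0 : 0 ≤ tt (n - 1) := ht0 ▸ le_of_forall_lt_succ htmono (Nat.zero_le _) (by omega)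
    have hab : tt (n - 1) ≤ tt n := le_of_forall_lt_succ htmono (by omega) hnN
    have hT : tt n ≤ T := htN ▸ le_of_forall_lt_succ htmono hnN le_rfl
    have hIcc : Set.Icc (tt (n - 1)) (tt n) ⊆ Set.Icc 0 T := Set.Icc_subset_Icc h0 hT
    have huIcc : Set.uIcc (tt (n - 1)) (tt n) ⊆ Set.uIcc 0 T := by
      rwa [Set.uIcc_of_le hab, Set.uIcc_of_le (h0.trans (hab.trans hT))]
    have hIoo : Set.Ioo (tt (n - 1)) (tt n) ⊆ Set.Ioo 0 T := Set.Ioo_subset_Ioo h0 hT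
    exact integral_dGIntegrand_interpolant hφ hlam hab (hu1c.mono hIcc) (hu2c.mono hIcc) hu1H2
      hu2V (hu1H2i.mono_set huIcc) (hu2Vi.mono_set huIcc) (hf.mono_set huIcc)
      (fun t ht => hode1 t (hIoo ht)) (fun t ht => hode2 t (hIoo ht)) (hP1V n) (hP1H2 n)
      (hP2V n) (hd1 n) (hd2 n) (hP1node n hn) (hP2node n hn) (hP1orth n hn) (hP2orth n hn)
  have hjump : ∀ n ∈ Finset.Icc 1 (N - 1),
      dGJump φ lam tt q P1 P2 d1 d2 n = A (n + 1) + B (n + 1) := by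
    intro n hn
    have hn' : n ∈ Finset.Icc 1 N := by simp only [Finset.mem_Icc] at hn ⊢; omega
    simp only [dGJump, A, B, Nat.add_sub_cancel, hP1node n hn', hP2node n hn']
  have hinit1 : aForm φ lam (pval q P1 1 (tt 0)) (pval q d1 1 (tt 0))
      = A 1 + aForm φ lam (u1 0) (pval q d1 1 (tt 0)) := by
    simp only [A, Nat.sub_self]
    rw [aForm_sub_left hlam (by norm_num) (MemHs.pval hlam (hP1H2 1) _) (hu1H2 _)
      (hφ.memHs_zero lam _), ht0]
    ring
  have hinit2 : ⟪pval q P2 1 (tt 0), pval q d2 1 (tt 0)⟫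
      = B 1 + ⟪u2 0, pval q d2 1 (tt 0)⟫ := by
    simp only [B, Nat.sub_self, inner_sub_left, ht0]
    ring
  obtain ⟨M, rfl⟩ := Nat.exists_eq_add_of_le' hN
  rw [Bform_eq, Finset.sum_congr rfl hinterval, Finset.sum_congr rfl hjump, hinit1, hinit2,
    Nat.add_sub_cancel]
  simp only [Finset.sum_sub_distrib, Finset.sum_add_distrib, ← Finset.add_sum_Icc_succ A M,
    ← Finset.add_sum_Icc_succ B M]
  ring

end IntegrationByParts

end WeightedSpaces

theorem dG_error_equation_general
    {H : Type*} [NormedAddCommGroup H] [InnerProductSpace ℝ H] [CompleteSpace H]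
    (φ : ℕ → H) (lam : ℕ → ℝ)
    (hφ : Orthonormal ℝ φ)
    (hlam_pos : ∀ k, 0 < lam k)
    (q : ℕ)
    -- the temporal mesh 0 = t₀ < t₁ < ⋯ < t_N = T
    (T : ℝ) (N : ℕ) (hN : 1 ≤ N)
    (tt : ℕ → ℝ) (ht0 : tt 0 = 0) (htN : tt N = T)
    (htmono : ∀ n < N, tt n < tt (n + 1))
    -- data
    (f : ℝ → H) (hf : IntervalIntegrable f volume 0 T)
    (u0 v0 : H)
    -- exact solution (u₁,u₂), with u₁(t) ∈ Ḣ²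
    (u1 u2 : ℝ → H)
    (hu10 : u1 0 = u0) (hu20 : u2 0 = v0)
    (hu1c : ContinuousOn u1 (Set.Icc 0 T)) (hu2c : ContinuousOn u2 (Set.Icc 0 T))
    (hu1H2 : ∀ t, MemHs φ lam 2 (u1 t)) (hu2V : ∀ t, MemHs φ lam 1 (u2 t))
    (hu1H2i : IntervalIntegrable (fun t => hsNorm φ lam 2 (u1 t)) volume 0 T)
    (hu2Vi : IntervalIntegrable (fun t => hsNorm φ lam 1 (u2 t)) volume 0 T)
    (hode1 : ∀ t ∈ Set.Ioo 0 T, HasDerivAt u1 (u2 t) t)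
    (hode2 : ∀ t ∈ Set.Ioo 0 T, HasDerivAt u2 (f t - Aop φ lam (u1 t)) t)
    -- the dG(q) approximation U = (U₁,U₂) ∈ 𝒱_q (coefficient families c1, c2)
    (c1 c2 : ℕ → ℕ → H)
    (hc1V : ∀ n j, MemHs φ lam 1 (c1 n j)) (hc2V : ∀ n j, MemHs φ lam 1 (c2 n j))
    (hU : ∀ d1 d2 : ℕ → ℕ → H, (∀ n j, MemHs φ lam 1 (d1 n j)) →
      (∀ n j, MemHs φ lam 1 (d2 n j)) →
      Bform φ lam tt N q c1 c2 d1 d2 =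
        (∑ n ∈ Finset.Icc 1 N, ∫ s in tt (n-1)..tt n, ⟪f s, pval q d2 n s⟫)
          + aForm φ lam u0 (pval q d1 1 (tt 0)) + ⟪v0, pval q d2 1 (tt 0)⟫)
    -- the interpolant Π_k u = (Π_k u₁, Π_k u₂) (coefficient families P1, P2)
    (P1 P2 : ℕ → ℕ → H)
    (hP1V : ∀ n j, MemHs φ lam 1 (P1 n j)) (hP1H2 : ∀ n j, MemHs φ lam 2 (P1 n j))
    (hP2V : ∀ n j, MemHs φ lam 1 (P2 n j))
    (hP1node : ∀ n ∈ Finset.Icc 1 N, pval q P1 n (tt n) = u1 (tt n))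
    (hP2node : ∀ n ∈ Finset.Icc 1 N, pval q P2 n (tt n) = u2 (tt n))
    (hP1orth : ∀ n ∈ Finset.Icc 1 N, ∀ j ∈ Finset.range q,
      (∫ s in tt (n-1)..tt n, (s ^ j) • (pval q P1 n s - u1 s)) = 0)
    (hP2orth : ∀ n ∈ Finset.Icc 1 N, ∀ j ∈ Finset.range q,
      (∫ s in tt (n-1)..tt n, (s ^ j) • (pval q P2 n s - u2 s)) = 0) :
    -- B(θ,V) = ∫₀^{t_N} ( a(η₂,V₁) - (Aη₁,V₂) ) dt  for every V ∈ 𝒱_q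
    ∀ d1 d2 : ℕ → ℕ → H, (∀ n j, MemHs φ lam 1 (d1 n j)) →
      (∀ n j, MemHs φ lam 1 (d2 n j)) →
      Bform φ lam tt N q (fun n j => c1 n j - P1 n j) (fun n j => c2 n j - P2 n j) d1 d2
        = ∑ n ∈ Finset.Icc 1 N, ∫ s in tt (n-1)..tt n,
            (aForm φ lam (pval q P2 n s - u2 s) (pval q d1 n s)
              - ⟪Aop φ lam (pval q P1 n s - u1 s), pval q d2 n s⟫) := by
  intro d1 d2 hd1 hd2
  rw [Bform_sub hlam_pos tt N hc1V hc2V hP1V hP2V hd1 hd2, hU d1 d2 hd1 hd2,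
    Bform_interpolant hφ hlam_pos hN ht0 htN htmono hf hu1c hu2c hu1H2 hu2V hu1H2i hu2Vi hode1
      hode2 hP1V hP1H2 hP2V hd1 hd2 hP1node hP2node hP1orth hP2orth, hu10, hu20]
  ring

/-- **Error equation (4.4) for the interpolated dG(q) error.**
`θ = U - Π_k u` and `η = Π_k u - u`, where the interpolant `Π_k u` is described by
its coefficient families `P1, P2`.  For every `V ∈ 𝒱_q`,
`B(θ,V) = ∫₀^{t_N} ( a(η₂,V₁) - (Aη₁,V₂) ) dt`. -/
theorem dG_error_equation
    {H : Type*} [NormedAddCommGroup H] [InnerProductSpace ℝ H] [CompleteSpace H]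
    (φ : ℕ → H) (lam : ℕ → ℝ)
    (hφ : Orthonormal ℝ φ)
    (hφtotal : (Submodule.span ℝ (Set.range φ)).topologicalClosure = ⊤)
    (hlam_pos : ∀ k, 0 < lam k) (hlam_mono : Monotone lam)
    (hlam_top : Filter.Tendsto lam Filter.atTop Filter.atTop)
    (q : ℕ)
    -- the temporal mesh 0 = t₀ < t₁ < ⋯ < t_N = T
    (T : ℝ) (hT : 0 < T) (N : ℕ) (hN : 1 ≤ N)
    (tt : ℕ → ℝ) (ht0 : tt 0 = 0) (htN : tt N = T)
    (htmono : ∀ n < N, tt n < tt (n + 1))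
    -- data
    (f : ℝ → H) (hf : IntervalIntegrable f volume 0 T)
    (u0 v0 : H) (hu0 : MemHs φ lam 1 u0)
    -- exact solution (u₁,u₂), with u₁(t) ∈ Ḣ²
    (u1 u2 : ℝ → H)
    (hu10 : u1 0 = u0) (hu20 : u2 0 = v0)
    (hu1c : ContinuousOn u1 (Set.Icc 0 T)) (hu2c : ContinuousOn u2 (Set.Icc 0 T))
    (hu1H2 : ∀ t, MemHs φ lam 2 (u1 t)) (hu2V : ∀ t, MemHs φ lam 1 (u2 t))
    (hu1H2i : IntervalIntegrable (fun t => hsNorm φ lam 2 (u1 t)) volume 0 T)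
    (hu2Vi : IntervalIntegrable (fun t => hsNorm φ lam 1 (u2 t)) volume 0 T)
    (hode1 : ∀ t ∈ Set.Ioo 0 T, HasDerivAt u1 (u2 t) t)
    (hode2 : ∀ t ∈ Set.Ioo 0 T, HasDerivAt u2 (f t - Aop φ lam (u1 t)) t)
    -- the dG(q) approximation U = (U₁,U₂) ∈ 𝒱_q (coefficient families c1, c2)
    (c1 c2 : ℕ → ℕ → H)
    (hc1V : ∀ n j, MemHs φ lam 1 (c1 n j)) (hc2V : ∀ n j, MemHs φ lam 1 (c2 n j))
    (hU : ∀ d1 d2 : ℕ → ℕ → H, (∀ n j, MemHs φ lam 1 (d1 n j)) →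
      (∀ n j, MemHs φ lam 1 (d2 n j)) →
      Bform φ lam tt N q c1 c2 d1 d2 =
        (∑ n ∈ Finset.Icc 1 N, ∫ s in tt (n-1)..tt n, ⟪f s, pval q d2 n s⟫)
          + aForm φ lam u0 (pval q d1 1 (tt 0)) + ⟪v0, pval q d2 1 (tt 0)⟫)
    -- the interpolant Π_k u = (Π_k u₁, Π_k u₂) (coefficient families P1, P2)
    (P1 P2 : ℕ → ℕ → H)
    (hP1V : ∀ n j, MemHs φ lam 1 (P1 n j)) (hP1H2 : ∀ n j, MemHs φ lam 2 (P1 n j))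
    (hP2V : ∀ n j, MemHs φ lam 1 (P2 n j))
    (hP1node : ∀ n ∈ Finset.Icc 1 N, pval q P1 n (tt n) = u1 (tt n))
    (hP2node : ∀ n ∈ Finset.Icc 1 N, pval q P2 n (tt n) = u2 (tt n))
    (hP1orth : ∀ n ∈ Finset.Icc 1 N, ∀ j ∈ Finset.range q,
      (∫ s in tt (n-1)..tt n, (s ^ j) • (pval q P1 n s - u1 s)) = 0)
    (hP2orth : ∀ n ∈ Finset.Icc 1 N, ∀ j ∈ Finset.range q,
      (∫ s in tt (n-1)..tt n, (s ^ j) • (pval q P2 n s - u2 s)) = 0) :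
    -- B(θ,V) = ∫₀^{t_N} ( a(η₂,V₁) - (Aη₁,V₂) ) dt  for every V ∈ 𝒱_q
    ∀ d1 d2 : ℕ → ℕ → H, (∀ n j, MemHs φ lam 1 (d1 n j)) →
      (∀ n j, MemHs φ lam 1 (d2 n j)) →
      Bform φ lam tt N q (fun n j => c1 n j - P1 n j) (fun n j => c2 n j - P2 n j) d1 d2
        = ∑ n ∈ Finset.Icc 1 N, ∫ s in tt (n-1)..tt n,
            (aForm φ lam (pval q P2 n s - u2 s) (pval q d1 n s)
              - ⟪Aop φ lam (pval q P1 n s - u1 s), pval q d2 n s⟫) :=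
  dG_error_equation_general φ lam hφ hlam_pos q T N hN tt ht0 htN htmono f hf u0 v0 u1 u2 hu10 hu20
    hu1c hu2c hu1H2 hu2V hu1H2i hu2Vi hode1 hode2 c1 c2 hc1V hc2V hU P1 P2 hP1V hP1H2 hP2V hP1node
    hP2node hP1orth hP2orth
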